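/- Let ℏ > 0, m ≥ 1, and let a, b ∈ ℂ^m satisfy ∑ a_i² = 1 and ∑ a_i b_i = 0. Then the partial polar element commutes with the linear forms ⟨b,u⟩ and ⟨b,v⟩ under the ΨDO product: F_a *_{K₀} ⟨b,u⟩ = ⟨b,u⟩ *_{K₀} F_a and F_a *_{K₀} ⟨b,v⟩ = ⟨b,v⟩ *_{K₀} F_a, where explicitly ⟨b,u⟩ *_{K₀} F_a = ⟨b,u⟩·F_a, F_a *_{K₀} ⟨b,u⟩ = F_a·⟨b,u⟩ + iℏ ∑_j b_j ∂_{v_j}F_a, ⟨b,v⟩ *_{K₀} F_a = ⟨b,v⟩·F_a + iℏ ∑_j b_j ∂_{u_j}F_a, and F_a *_{K₀} ⟨b,v⟩ = F_a·⟨b,v⟩. -/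
import Mathlib


/-- Functions on `ℂ^{2m}`, written as functions of `(u, v)` with `u, v : Fin m → ℂ`. -/
abbrev HolFn (m : ℕ) := (Fin m → ℂ) → (Fin m → ℂ) → ℂ

/-- Partial derivative `∂_{u_j}`. -/
noncomputable def pdU (m : ℕ) (j : Fin m) (f : HolFn m) : HolFn m :=
  fun u v => fderiv ℂ (fun w => f w v) u (Pi.single j 1)

/-- Partial derivative `∂_{v_j}`. -/
noncomputable def pdV (m : ℕ) (j : Fin m) (f : HolFn m) : HolFn m :=
  fun u v => fderiv ℂ (fun w => f u w) v (Pi.single j 1)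

/-- Normal ordered expression of the partial polar element `ε₀₀(a)`:
`F_a(u,v) = i·exp(−(2/(iℏ))·⟨a,u⟩⟨a,v⟩)`. -/
noncomputable def polarElt (ℏ : ℝ) (m : ℕ) (a : Fin m → ℂ) : HolFn m :=
  fun u v => Complex.I *
    Complex.exp (-(2 / (Complex.I * ℏ)) * ((∑ i, a i * u i) * (∑ i, a i * v i)))

lemma key (m : ℕ) (c : ℂ) (a : Fin m → ℂ) (v : Fin m → ℂ) (j : Fin m) :
    fderiv ℂ (fun w : Fin m → ℂ => Complex.I * Complex.exp (c * ∑ i, a i * w i)) v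
      (Pi.single j 1)
    = Complex.I * Complex.exp (c * ∑ i, a i * v i) * (c * a j) := by
  set L : (Fin m → ℂ) →L[ℂ] ℂ := ∑ i, a i • (ContinuousLinearMap.proj i) with hL
  have hLapp : ∀ w, L w = ∑ i, a i * w i := by
    intro w
    simp [hL, ContinuousLinearMap.sum_apply]
  have h1 : HasFDerivAt (fun w : Fin m → ℂ => c * L w) (c • L) v :=
    (L.hasFDerivAt).const_mul c
  have h2 : HasFDerivAt (fun w : Fin m → ℂ => Complex.exp (c * L w))
      (Complex.exp (c * L v) • (c • L)) v := h1.cexp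
  have h3 := (h2.const_mul Complex.I).fderiv
  have heq : (fun w : Fin m → ℂ => Complex.I * Complex.exp (c * ∑ i, a i * w i))
      = fun w => Complex.I * Complex.exp (c * L w) := by
    funext w; rw [hLapp]
  rw [heq, h3]
  have hLj : L (Pi.single j 1) = a j := by
    rw [hLapp]
    simp [Pi.single_apply, Finset.sum_ite_eq']
  simp [hLj, hLapp]
  ring

theorem statement4 (ℏ : ℝ) (hℏ : 0 < ℏ) (m : ℕ) (hm : 1 ≤ m)
    (a b : Fin m → ℂ) (ha : ∑ i, a i ^ 2 = 1) (hab : ∑ i, a i * b i = 0) :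
    ∀ u v : Fin m → ℂ,
      -- F_a *_{K₀} ⟨b,u⟩ = ⟨b,u⟩ *_{K₀} F_a
      (polarElt ℏ m a u v * (∑ i, b i * u i) +
          (Complex.I * ℏ) * ∑ j, b j * pdV m j (polarElt ℏ m a) u v
        = (∑ i, b i * u i) * polarElt ℏ m a u v) ∧
      -- F_a *_{K₀} ⟨b,v⟩ = ⟨b,v⟩ *_{K₀} F_a
      (polarElt ℏ m a u v * (∑ i, b i * v i)
        = (∑ i, b i * v i) * polarElt ℏ m a u v +
          (Complex.I * ℏ) * ∑ j, b j * pdU m j (polarElt ℏ m a) u v) := by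
  intro u v
  set cV : ℂ := -(2 / (Complex.I * ℏ)) * (∑ i, a i * u i) with hcV
  set cU : ℂ := -(2 / (Complex.I * ℏ)) * (∑ i, a i * v i) with hcU
  have hV : ∀ j, pdV m j (polarElt ℏ m a) u v
      = Complex.I * Complex.exp (cV * ∑ i, a i * v i) * (cV * a j) := by
    intro j
    have heq : (fun w => polarElt ℏ m a u w)
        = fun w => Complex.I * Complex.exp (cV * ∑ i, a i * w i) := by
      funext w; unfold polarElt; rw [hcV]; congr 2; ring
    rw [pdV, heq, key]
  have hU : ∀ j, pdU m j (polarElt ℏ m a) u v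
      = Complex.I * Complex.exp (cU * ∑ i, a i * u i) * (cU * a j) := by
    intro j
    have heq : (fun w => polarElt ℏ m a w v)
        = fun w => Complex.I * Complex.exp (cU * ∑ i, a i * w i) := by
      funext w; unfold polarElt; rw [hcU]; congr 2; ring
    rw [pdU, heq, key]
  have hsumV : ∑ j, b j * pdV m j (polarElt ℏ m a) u v = 0 := by
    simp only [hV]
    have : ∑ j, b j * (Complex.I * Complex.exp (cV * ∑ i, a i * v i) * (cV * a j))
        = ∑ j, (Complex.I * Complex.exp (cV * ∑ i, a i * v i) * cV) * (a j * b j) :=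
      Finset.sum_congr rfl fun j _ => by ring
    rw [this, ← Finset.mul_sum, hab, mul_zero]
  have hsumU : ∑ j, b j * pdU m j (polarElt ℏ m a) u v = 0 := by
    simp only [hU]
    have : ∑ j, b j * (Complex.I * Complex.exp (cU * ∑ i, a i * u i) * (cU * a j))
        = ∑ j, (Complex.I * Complex.exp (cU * ∑ i, a i * u i) * cU) * (a j * b j) :=
      Finset.sum_congr rfl fun j _ => by ring
    rw [this, ← Finset.mul_sum, hab, mul_zero]
  constructor
  · rw [hsumV]; ring
  · rw [hsumU]; ring
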